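/- (Finite horizon existence and uniqueness) Fix an integer T > 0, an F_T-measurable real random variable ξ, and a driver f : Ω × {0,…,T−1} × ℝ × ℝ^N → ℝ satisfying: (i) for any adapted real process Y and any adapted ℝ^N-valued processes Z ∼_M Z', f(ω,t,Y_t,Z_t) = f(ω,t,Y_t,Z'_t) a.s. for all t; (ii) for any z ∈ ℝ^N, any t ∈ {0,…,T−1} and almost all ω, the map y ↦ y − f(ω,t,y,z) is a bijection ℝ → ℝ. Then there exists an adapted pair (Y,Z) of processes in ℝ × ℝ^N such that Y_t − Σ_{t≤u<T} f(ω,u,Y_u,Z_u) + Σ_{t≤u<T} Z_uᵀM_{u+1} = ξ holds a.s. for all t ∈ {0,…,T}; moreover this solution is unique up to indistinguishability for Y and up to ∼_M-equivalence for Z. -/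

import Mathlib

open MeasureTheory Finset Filter

noncomputable section

namespace DiscreteEBSDE

variable {Ω : Type*} {mΩ : MeasurableSpace Ω} {N : ℕ}

/-- The standard basis vector `e i` of `ℝ^N`. -/
def e (N : ℕ) (i : Fin N) : Fin N → ℝ := Pi.single i 1

/-- The Euclidean inner product on `ℝ^N`. -/
def dotR {N : ℕ} (z w : Fin N → ℝ) : ℝ := ∑ i, z i * w i

/-- The process `X` takes values in the standard basis of `ℝ^N`. -/
def BasisValued (X : ℕ → Ω → (Fin N → ℝ)) : Prop := ∀ t ω, ∃ i, X t ω = e N i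

/-- The σ-algebra generated by `X 0, …, X t`. -/
def natSigma (X : ℕ → Ω → (Fin N → ℝ)) (t : ℕ) : MeasurableSpace Ω :=
  ⨆ s ∈ Set.Iic t, MeasurableSpace.comap (X s) inferInstance

/-- `F` is the `P`-completion of the natural filtration of `X`:
a set is `F t`-measurable iff it agrees with a set of the natural σ-algebra up to a
`P`-null symmetric difference. -/
def IsCompletedNaturalFiltration (P : Measure Ω) (X : ℕ → Ω → (Fin N → ℝ))
    (F : Filtration ℕ mΩ) : Prop :=
  ∀ (t : ℕ) (A : Set Ω), MeasurableSet[F t] A ↔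
    ∃ B : Set Ω, MeasurableSet[natSigma X t] B ∧ P (symmDiff A B) = 0

/-- The martingale difference `M (t+1) = X (t+1) - E[X (t+1) | F t]` (componentwise). -/
def Mdiff (P : Measure Ω) (F : Filtration ℕ mΩ) (X : ℕ → Ω → (Fin N → ℝ)) (t : ℕ)
    (ω : Ω) : Fin N → ℝ :=
  fun i => X (t + 1) ω i - (P[(fun ω' => X (t + 1) ω' i)|F t]) ω

/-- The conditional second moment `‖Z‖²_{M_{t+1}} = E[(Zᵀ M_{t+1})² | F t]`. -/
def seminormSq (P : Measure Ω) (F : Filtration ℕ mΩ) (X : ℕ → Ω → (Fin N → ℝ))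
    (t : ℕ) (Z : Ω → Fin N → ℝ) : Ω → ℝ :=
  P[(fun ω => (dotR (Z ω) (Mdiff P F X t ω)) ^ 2)|F t]

/-- The stochastic seminorm `‖Z‖_{M_{t+1}}`. -/
def mSeminorm (P : Measure Ω) (F : Filtration ℕ mΩ) (X : ℕ → Ω → (Fin N → ℝ))
    (t : ℕ) (Z : Ω → Fin N → ℝ) (ω : Ω) : ℝ :=
  Real.sqrt (seminormSq P F X t Z ω)

/-- `Z ∼_{M_{t+1}} Z'`, i.e. `‖Z - Z'‖_{M_{t+1}} = 0` a.s. -/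
def equivMt (P : Measure Ω) (F : Filtration ℕ mΩ) (X : ℕ → Ω → (Fin N → ℝ)) (t : ℕ)
    (Z Z' : Ω → Fin N → ℝ) : Prop :=
  seminormSq P F X t (fun ω => Z ω - Z' ω) =ᵐ[P] 0

/-- `Z ∼_M Z'`. -/
def equivM (P : Measure Ω) (F : Filtration ℕ mΩ) (X : ℕ → Ω → (Fin N → ℝ))
    (Z Z' : ℕ → Ω → Fin N → ℝ) : Prop :=
  ∀ t, equivMt P F X t (Z t) (Z' t)

/-- A driver `f(ω,t,y,z)` is adapted if `(ω,y,z) ↦ f(ω,t,y,z)` is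
`F t ⊗ B(ℝ) ⊗ B(ℝ^N)`-measurable for every `t`. -/
def DriverAdapted (F : Filtration ℕ mΩ) (f : Ω → ℕ → ℝ → (Fin N → ℝ) → ℝ) : Prop :=
  ∀ t : ℕ, Measurable[(F t).prod inferInstance]
    fun p : Ω × (ℝ × (Fin N → ℝ)) => f p.1 t p.2.1 p.2.2

/-- A column-stochastic transition matrix. -/
def IsTransMat {n : ℕ} (A : Matrix (Fin n) (Fin n) ℝ) : Prop :=
  (∀ i j, 0 ≤ A i j) ∧ ∀ j, ∑ i, A i j = 1

/-- `X` is a Markov chain with transition matrices `A t`; since `X` is valued in the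
standard basis this is equivalent to `E[X (t+1) | F t] = (A t) (X t)` a.s. -/
def IsMarkovChain (P : Measure Ω) (F : Filtration ℕ mΩ) (X : ℕ → Ω → (Fin N → ℝ))
    (A : ℕ → Matrix (Fin N) (Fin N) ℝ) : Prop :=
  (∀ t, IsTransMat (A t)) ∧
    ∀ (t : ℕ) (i : Fin N),
      (P[(fun ω => X (t + 1) ω i)|F t]) =ᵐ[P] fun ω => (A t).mulVec (X t ω) i

/-- The atom of `F t` containing `ω₀` (the set of paths agreeing with `ω₀` up to time `t`). -/
def pathAtom (X : ℕ → Ω → (Fin N → ℝ)) (t : ℕ) (ω₀ : Ω) : Set Ω :=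
  {ω' | ∀ s ≤ t, X s ω' = X s ω₀}

/-- `min_{i ∈ J_t^F} (z - z')ᵀ(e_i - E[X_{t+1} | F_t])` where `F` is the atom of `ω₀`
 at time `t` and `J_t^F = {i : P(X_{t+1} = e_i | F) > 0}`. -/
def minJump (P : Measure Ω) (F : Filtration ℕ mΩ) (X : ℕ → Ω → (Fin N → ℝ))
    (t : ℕ) (ω₀ : Ω) (z z' : Fin N → ℝ) (ω : Ω) : ℝ :=
  sInf {r : ℝ | ∃ i : Fin N,
    0 < P ({ω' | X (t + 1) ω' = e N i} ∩ pathAtom X t ω₀) ∧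
    r = dotR (z - z') (fun j => e N i j - (P[(fun ω'' => X (t + 1) ω'' j)|F t]) ω)}

/-- The comparison condition of the change-of-measure proposition: on every atom `F` of
`F t`, `f(ω,t,y,z) - f(ω,t,y,z') > min_{i ∈ J_t^F}{(z-z')ᵀ(e_i - E[X_{t+1}|F_t])}`, unless
this minimum is `0`, in which case equality holds. -/
def ComparisonCondition (P : Measure Ω) (F : Filtration ℕ mΩ) (X : ℕ → Ω → (Fin N → ℝ))
    (f : Ω → ℕ → ℝ → (Fin N → ℝ) → ℝ) : Prop :=
  ∀ (t : ℕ) (y : ℝ) (z z' : Fin N → ℝ) (ω₀ : Ω), 0 < P (pathAtom X t ω₀) →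
    ∀ᵐ ω ∂P, ω ∈ pathAtom X t ω₀ →
      (minJump P F X t ω₀ z z' ω = 0 → f ω t y z - f ω t y z' = 0) ∧
      (minJump P F X t ω₀ z z' ω ≠ 0 →
        minJump P F X t ω₀ z z' ω < f ω t y z - f ω t y z')

/-- `f` is Lipschitz in `z` with constant `L`, w.r.t. the stochastic seminorm. -/
def DriverLipschitzNoY (P : Measure Ω) (F : Filtration ℕ mΩ) (X : ℕ → Ω → (Fin N → ℝ))
    (L : ℝ) (f : Ω → ℕ → (Fin N → ℝ) → ℝ) : Prop :=
  ∀ (t : ℕ) (Zt Z't : Ω → Fin N → ℝ),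
    StronglyMeasurable[F t] Zt → StronglyMeasurable[F t] Z't →
    ∀ᵐ ω ∂P, |f ω t (Zt ω) - f ω t (Z't ω)| ≤
      L * mSeminorm P F X t (fun ω' => Zt ω' - Z't ω') ω

/-- `(Y,Z)` is an adapted solution of the finite horizon BSDE with driver `f`,
horizon `T` and terminal condition `ξ`. -/
def SolvesFiniteBSDE (P : Measure Ω) (F : Filtration ℕ mΩ) (X : ℕ → Ω → (Fin N → ℝ))
    (f : Ω → ℕ → ℝ → (Fin N → ℝ) → ℝ) (T : ℕ) (ξ : Ω → ℝ)
    (Y : ℕ → Ω → ℝ) (Z : ℕ → Ω → Fin N → ℝ) : Prop :=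
  Adapted F Y ∧ Adapted F Z ∧
    ∀ t ≤ T, ∀ᵐ ω ∂P,
      Y t ω - ∑ u ∈ Finset.Ico t T, f ω u (Y u ω) (Z u ω) +
        ∑ u ∈ Finset.Ico t T, dotR (Z u ω) (Mdiff P F X u ω) = ξ ω

/-- `(Y,Z)` is an adapted solution of the infinite-horizon discounted BSDE
with discount rate `α` and driver `f` (independent of `y`). -/
def SolvesDiscountedBSDE (P : Measure Ω) (F : Filtration ℕ mΩ) (X : ℕ → Ω → (Fin N → ℝ))
    (α : ℝ) (f : Ω → ℕ → (Fin N → ℝ) → ℝ)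
    (Y : ℕ → Ω → ℝ) (Z : ℕ → Ω → Fin N → ℝ) : Prop :=
  Adapted F Y ∧ Adapted F Z ∧
    ∀ t T : ℕ, t < T → ∀ᵐ ω ∂P,
      Y T ω = Y t ω - ∑ u ∈ Finset.Ico t T, (f ω u (Z u ω) - α * Y u ω) +
        ∑ u ∈ Finset.Ico t T, dotR (Z u ω) (Mdiff P F X u ω)

/-- `(Y,Z,lam)` solves the Ergodic BSDE with Markovian driver `f`. -/
def SolvesEBSDE (P : Measure Ω) (F : Filtration ℕ mΩ) (X : ℕ → Ω → (Fin N → ℝ))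
    (f : (Fin N → ℝ) → (Fin N → ℝ) → ℝ) (Y : ℕ → Ω → ℝ) (Z : ℕ → Ω → Fin N → ℝ)
    (lam : ℝ) : Prop :=
  ∀ t T : ℕ, t < T → ∀ᵐ ω ∂P,
    Y T ω = Y t ω - ∑ u ∈ Finset.Ico t T, (f (X u ω) (Z u ω) - lam) +
      ∑ u ∈ Finset.Ico t T, dotR (Z u ω) (Mdiff P F X u ω)

/-- Ratio with the convention `0/0 := 1`. -/
def balRatio (a b : ℝ) : ℝ := if a = 0 ∧ b = 0 then 1 else a / b

/-- The driver `f(ω,t,y,z)` is `γ`-balanced. -/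
def IsGammaBalanced (P : Measure Ω) (F : Filtration ℕ mΩ) (X : ℕ → Ω → (Fin N → ℝ))
    (A : ℕ → Matrix (Fin N) (Fin N) ℝ) (γ : ℝ)
    (f : Ω → ℕ → ℝ → (Fin N → ℝ) → ℝ) : Prop :=
  ∃ ψ : Ω → ℕ → (Fin N → ℝ) → (Fin N → ℝ) → (Fin N → ℝ),
    (∀ t : ℕ, Measurable[(F t).prod inferInstance]
      fun p : Ω × ((Fin N → ℝ) × (Fin N → ℝ)) => ψ p.1 t p.2.1 p.2.2) ∧
    ∀ (t : ℕ) (y : ℝ) (z z' : Fin N → ℝ), ∀ᵐ ω ∂P,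
      f ω t y z - f ω t y z' =
          dotR (z - z') (fun i => ψ ω t z z' i - (A t).mulVec (X t ω) i) ∧
        (∀ i, balRatio (ψ ω t z z' i) ((A t).mulVec (X t ω) i) ∈ Set.Icc γ γ⁻¹) ∧
        ∑ i, ψ ω t z z' i = 1

/-- The driver `f(ω,t,z)` (independent of `y`) is `γ`-balanced. -/
def IsGammaBalancedNoY (P : Measure Ω) (F : Filtration ℕ mΩ) (X : ℕ → Ω → (Fin N → ℝ))
    (A : ℕ → Matrix (Fin N) (Fin N) ℝ) (γ : ℝ)
    (f : Ω → ℕ → (Fin N → ℝ) → ℝ) : Prop :=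
  ∃ ψ : Ω → ℕ → (Fin N → ℝ) → (Fin N → ℝ) → (Fin N → ℝ),
    (∀ t : ℕ, Measurable[(F t).prod inferInstance]
      fun p : Ω × ((Fin N → ℝ) × (Fin N → ℝ)) => ψ p.1 t p.2.1 p.2.2) ∧
    ∀ (t : ℕ) (z z' : Fin N → ℝ), ∀ᵐ ω ∂P,
      f ω t z - f ω t z' =
          dotR (z - z') (fun i => ψ ω t z z' i - (A t).mulVec (X t ω) i) ∧
        (∀ i, balRatio (ψ ω t z z' i) ((A t).mulVec (X t ω) i) ∈ Set.Icc γ γ⁻¹) ∧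
        ∑ i, ψ ω t z z' i = 1

/-- A probability vector on `Fin n`. -/
def IsProbVec {n : ℕ} (μ : Fin n → ℝ) : Prop := (∀ i, 0 ≤ μ i) ∧ ∑ i, μ i = 1

/-- Total variation distance between (signed) measures on a finite state space. -/
def tvDist {n : ℕ} (μ ν : Fin n → ℝ) : ℝ := (∑ x, |μ x - ν x|) / 2

/-- Uniform ergodicity of the chain induced by the column-stochastic matrix `A`. -/
def UniformlyErgodic {n : ℕ} (A : Matrix (Fin n) (Fin n) ℝ) : Prop :=
  ∃ π : Fin n → ℝ, IsProbVec π ∧ ∃ R ρ : ℝ, 0 < R ∧ 0 < ρ ∧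
    ∀ (t : ℕ) (μ : Fin n → ℝ), IsProbVec μ →
      tvDist ((A ^ t).mulVec μ) π ≤ R * Real.exp (-ρ * t)

/-!
Every `F t`-measurable quantity, and also the driver `f(·, t, y, z)` uniformly in `(y, z)`,
agrees a.s. with a function of the trajectory `(X 0, …, X t)`, which takes finitely many values.
Backward from `Y T = ξ`, the one-step equation `Y t - f(t, Y t, Z t) + Z tᵀ M_{t+1} = Y (t+1)` is
then solved path by path: `Z t` lists the values of `Y (t+1)` on the `N` continuations of the
current path, so that `Z tᵀ X_{t+1} = Y (t+1)`, and `Y t` inverts `y ↦ y - f(t, y, Z t)` at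
`Z tᵀ E[X_{t+1} | F t]`.

For uniqueness, subtracting the one-step equations of two solutions writes an `F t`-measurable
variable as an increment `wᵀ M_{t+1}`. Conditioning on `F t` shows that both vanish, which gives
`Z t ∼ Z' t`; condition (i) and injectivity of `y ↦ y - f(t, y, z)` then give `Y t = Y' t`.
-/

lemma exists_factorsThrough_ae_eq {E γ : Type*} [Nonempty γ] {μ : Measure Ω} {π : Ω → E}
    {h : Ω → γ} {S : Set Ω} (hS : ∀ᵐ ω ∂μ, ω ∈ S)
    (hh : ∀ ω ∈ S, ∀ ω' ∈ S, π ω = π ω' → h ω = h ω') :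
    ∃ h' : Ω → γ, h'.FactorsThrough π ∧ h' =ᵐ[μ] h := by
  have hhS : (fun ω : S => h ω).FactorsThrough (fun ω : S => π ω) :=
    fun ω ω' => hh ω ω.2 ω' ω'.2
  refine ⟨Function.extend (fun ω : S => π ω) (fun ω : S => h ω)
    (fun _ => Classical.arbitrary γ) ∘ π, fun a b hab => by simp only [Function.comp_apply, hab],
    hS.mono fun ω hω => hhS.extend_apply _ ⟨ω, hω⟩⟩

lemma exists_prod_ae_eq_of_forall_ae_eq {β : Type*} [mβ : MeasurableSpace β]
    {m₁ m₂ : MeasurableSpace Ω} {μ : @Measure Ω mΩ}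
    (h : ∀ A, MeasurableSet[m₁] A → ∃ B, MeasurableSet[m₂] B ∧ μ (symmDiff A B) = 0)
    {C : Set (Ω × β)} (hC : MeasurableSet[m₁.prod mβ] C) :
    ∃ D, MeasurableSet[m₂.prod mβ] D ∧ ∀ᵐ ω ∂μ, ∀ b, (ω, b) ∈ C ↔ (ω, b) ∈ D := by
  let m : MeasurableSpace (Ω × β) :=
    { MeasurableSet' := fun C => ∃ D, MeasurableSet[m₂.prod mβ] D ∧
        ∀ᵐ ω ∂μ, ∀ b, (ω, b) ∈ C ↔ (ω, b) ∈ D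
      measurableSet_empty := ⟨∅, MeasurableSet.empty, ae_of_all _ fun _ _ => Iff.rfl⟩
      measurableSet_compl := by
        rintro C ⟨D, hD, hCD⟩
        exact ⟨Dᶜ, hD.compl, hCD.mono fun ω h b => not_congr (h b)⟩
      measurableSet_iUnion := by
        intro C hC
        choose D hD hCD using hC
        refine ⟨⋃ i, D i, MeasurableSet.iUnion hD, (ae_all_iff.2 hCD).mono fun ω h b => ?_⟩
        simp only [Set.mem_iUnion]
        exact exists_congr fun i => h i b }
  refine (sup_le ?_ ?_ : m₁.prod mβ ≤ m) C hC
  · rintro _ ⟨A, hA, rfl⟩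
    obtain ⟨B, hB, hAB⟩ := h A hA
    refine ⟨Prod.fst ⁻¹' B, measurable_fst hB, ?_⟩
    filter_upwards [measure_eq_zero_iff_ae_notMem.1 hAB] with ω hω b
    simpa [Set.mem_symmDiff, not_or, not_and_not_right, iff_iff_implies_and_implies] using hω
  · rintro _ ⟨S, hS, rfl⟩
    exact ⟨Prod.snd ⁻¹' S, measurable_snd hS, ae_of_all _ fun _ _ => Iff.rfl⟩

lemma forall_ae_sub_sum_add_sum_eq_iff {μ : Measure Ω} {T : ℕ} {Y a b : ℕ → Ω → ℝ}
    {ξ : Ω → ℝ} :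
    (∀ t ≤ T, ∀ᵐ ω ∂μ, Y t ω - ∑ u ∈ Ico t T, a u ω + ∑ u ∈ Ico t T, b u ω = ξ ω) ↔
      Y T =ᵐ[μ] ξ ∧ ∀ t < T, ∀ᵐ ω ∂μ, Y t ω - a t ω + b t ω = Y (t + 1) ω := by
  refine ⟨fun h => ⟨(h T le_rfl).mono fun ω hω => by simpa using hω, fun t ht => ?_⟩, ?_⟩
  · filter_upwards [h t ht.le, h (t + 1) ht] with ω h₁ h₂
    rw [sum_eq_sum_Ico_succ_bot ht, sum_eq_sum_Ico_succ_bot ht] at h₁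
    linarith
  · rintro ⟨hT, hstep⟩ t ht
    induction ht using Nat.decreasingInduction with
    | self => exact hT.mono fun ω hω => by simpa using hω
    | of_succ t ht ih =>
      filter_upwards [ih, hstep t ht] with ω h₁ h₂
      rw [sum_eq_sum_Ico_succ_bot ht, sum_eq_sum_Ico_succ_bot ht]
      linarith

def backwardIter {α : Type*} (T : ℕ) (x : α) (step : ℕ → α → α) (t : ℕ) : α :=
  if t < T then step t (backwardIter T x step (t + 1)) else x
termination_by T - t

section BackwardIter

variable {α : Type*} {T t : ℕ} {x : α} {step : ℕ → α → α}

lemma backwardIter_of_lt (h : t < T) :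
    backwardIter T x step t = step t (backwardIter T x step (t + 1)) := by
  rw [backwardIter, if_pos h]

lemma backwardIter_of_le (h : T ≤ t) : backwardIter T x step t = x := by
  rw [backwardIter, if_neg h.not_gt]

end BackwardIter

def condExpX (P : Measure Ω) (F : Filtration ℕ mΩ) (X : ℕ → Ω → (Fin N → ℝ)) (t : ℕ)
    (ω : Ω) : Fin N → ℝ :=
  fun i => P[fun ω' => X (t + 1) ω' i|F t] ω

section DotR

variable {P : Measure Ω} {F : Filtration ℕ mΩ} {X : ℕ → Ω → (Fin N → ℝ)} {t : ℕ}

lemma dotR_e (z : Fin N → ℝ) (i : Fin N) : dotR z (e N i) = z i := by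
  simp [dotR, e, Pi.single_apply]

lemma dotR_sub_left (z z' w : Fin N → ℝ) : dotR (z - z') w = dotR z w - dotR z' w := by
  simp [dotR, sub_mul]

lemma dotR_Mdiff (z : Fin N → ℝ) (ω : Ω) :
    dotR z (Mdiff P F X t ω) = dotR z (X (t + 1) ω) - dotR z (condExpX P F X t ω) := by
  simp [dotR, Mdiff, condExpX, mul_sub]

end DotR

def trajectory {E : Type*} (X : ℕ → Ω → E) (t : ℕ) (ω : Ω) : Fin (t + 1) → E :=
  fun s => X s ω

section Trajectory

variable {X : ℕ → Ω → (Fin N → ℝ)} {t : ℕ}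

lemma trajectory_succ {E : Type*} (X : ℕ → Ω → E) (t : ℕ) (ω : Ω) :
    trajectory X (t + 1) ω = Fin.snoc (trajectory X t ω) (X (t + 1) ω) := by
  funext s
  refine Fin.lastCases ?_ (fun j => ?_) s <;> simp [trajectory]

lemma measurable_trajectory : Measurable[natSigma X t] (trajectory X t) :=
  @measurable_pi_lambda _ _ _ (natSigma X t) _ _ fun s =>
    measurable_iff_comap_le.2 (le_iSup₂_of_le (s : ℕ) (Nat.lt_succ_iff.mp s.2) le_rfl)

lemma natSigma_le_comap_trajectory :
    natSigma X t ≤ MeasurableSpace.comap (trajectory X t) inferInstance :=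
  iSup₂_le fun s hs => by
    have : X s = (fun p : Fin (t + 1) → Fin N → ℝ => p ⟨s, Nat.lt_succ_of_le hs⟩) ∘
        trajectory X t := rfl
    rw [this, ← MeasurableSpace.comap_comp]
    exact MeasurableSpace.comap_mono (measurable_pi_apply _).comap_le

lemma natSigma_le (P : Measure Ω) {F : Filtration ℕ mΩ}
    (hF : IsCompletedNaturalFiltration P X F) (t : ℕ) : natSigma X t ≤ F t :=
  fun A hA => (hF t A).2 ⟨A, hA, by simp⟩

lemma finite_range_trajectory (hX : BasisValued X) : (Set.range (trajectory X t)).Finite := by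
  refine (Set.Finite.pi' fun _ : Fin (t + 1) => Set.finite_range (e N)).subset ?_
  rintro _ ⟨ω, rfl⟩ s
  obtain ⟨i, hi⟩ := hX s ω
  exact ⟨i, hi.symm⟩

lemma mem_iff_mem_of_trajectory_eq {β : Type*} [mβ : MeasurableSpace β] {D : Set (Ω × β)}
    (hD : MeasurableSet[(natSigma X t).prod mβ] D) {ω ω' : Ω}
    (h : trajectory X t ω = trajectory X t ω') (b : β) : (ω, b) ∈ D ↔ (ω', b) ∈ D := by
  have hle : (natSigma X t).prod mβ ≤
      (MeasurableSpace.pi.prod mβ).comap (Prod.map (trajectory X t) id) := by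
    rw [MeasurableSpace.comap_prodMap, MeasurableSpace.comap_id]
    exact sup_le_sup_right (MeasurableSpace.comap_mono natSigma_le_comap_trajectory) _
  obtain ⟨D', -, rfl⟩ := hle D hD
  simp [h]

end Trajectory

section FactorsThrough

variable {β : Type*} {X : ℕ → Ω → (Fin N → ℝ)} {t : ℕ} {g : Ω → β}

lemma measurableSet_preimage_of_factorsThrough (hX : BasisValued X)
    (hg : g.FactorsThrough (trajectory X t)) (S : Set β) :
    MeasurableSet[natSigma X t] (g ⁻¹' S) := by
  have hS : g ⁻¹' S = trajectory X t ⁻¹' (trajectory X t '' (g ⁻¹' S)) := by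
    ext ω
    refine ⟨fun hω => ⟨ω, hω, rfl⟩, ?_⟩
    rintro ⟨ω', hω', hωω'⟩
    rwa [Set.mem_preimage, hg hωω'] at hω'
  rw [hS]
  exact measurable_trajectory
    ((finite_range_trajectory hX).subset (Set.image_subset_range _ _)).measurableSet

lemma finite_range_of_factorsThrough (hX : BasisValued X)
    (hg : g.FactorsThrough (trajectory X t)) : (Set.range g).Finite := by
  have := (finite_range_trajectory (t := t) hX).to_subtype
  refine (Set.finite_range fun p : Set.range (trajectory X t) => g p.2.choose).subset ?_
  rintro _ ⟨ω, rfl⟩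
  exact ⟨⟨_, ω, rfl⟩, hg (Exists.choose_spec (⟨ω, rfl⟩ : ∃ ω', _ = trajectory X t ω))⟩

lemma stronglyMeasurable_of_factorsThrough [TopologicalSpace β] {P : Measure Ω}
    {F : Filtration ℕ mΩ} (hX : BasisValued X) (hF : IsCompletedNaturalFiltration P X F)
    (hg : g.FactorsThrough (trajectory X t)) : StronglyMeasurable[F t] g :=
  (@SimpleFunc.stronglyMeasurable _ _ (natSigma X t) _
    (@SimpleFunc.mk _ (natSigma X t) _ g
      (fun b => measurableSet_preimage_of_factorsThrough hX hg {b})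
      (finite_range_of_factorsThrough hX hg))).mono (natSigma_le P hF t)

end FactorsThrough

section Versions

variable {P : Measure Ω} {F : Filtration ℕ mΩ} {X : ℕ → Ω → (Fin N → ℝ)} {t : ℕ}

lemma exists_factorsThrough_ae_eq_of_measurable_uncurry {β : Type*} [MeasurableSpace β]
    (hF : IsCompletedNaturalFiltration P X F) {h : Ω → β → ℝ}
    (hh : Measurable[(F t).prod inferInstance] (Function.uncurry h)) :
    ∃ h' : Ω → β → ℝ, h'.FactorsThrough (trajectory X t) ∧ h' =ᵐ[P] h := by
  choose D hD hCD using fun q : ℚ =>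
    exists_prod_ae_eq_of_forall_ae_eq (fun A => (hF t A).1) (@hh (Set.Ioi q) measurableSet_Ioi)
  refine exists_factorsThrough_ae_eq (S := {ω | ∀ (q : ℚ) b, (q : ℝ) < h ω b ↔ (ω, b) ∈ D q})
    (ae_all_iff.2 hCD) fun ω hω ω' hω' hωω' => funext fun b =>
      eq_of_forall_rat_lt_iff_lt fun q => ?_
  rw [hω q b, hω' q b]
  exact mem_iff_mem_of_trajectory_eq (hD q) hωω' b

lemma exists_factorsThrough_ae_eq_of_stronglyMeasurable
    (hF : IsCompletedNaturalFiltration P X F) {g : Ω → ℝ} (hg : StronglyMeasurable[F t] g) :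
    ∃ g' : Ω → ℝ, g'.FactorsThrough (trajectory X t) ∧ g' =ᵐ[P] g := by
  obtain ⟨h', hh', hae⟩ := exists_factorsThrough_ae_eq_of_measurable_uncurry hF
    (h := fun ω (_ : Unit) => g ω) (hg.measurable.comp measurable_fst)
  exact ⟨fun ω => h' ω (), fun _ _ hab => congrFun (hh' hab) (),
    hae.mono fun _ hω => congrFun hω ()⟩

lemma exists_factorsThrough_ae_eq_of_stronglyMeasurable_pi
    (hF : IsCompletedNaturalFiltration P X F) {Z : Ω → Fin N → ℝ}
    (hZ : StronglyMeasurable[F t] Z) :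
    ∃ Z' : Ω → Fin N → ℝ, Z'.FactorsThrough (trajectory X t) ∧ Z' =ᵐ[P] Z :=
  exists_factorsThrough_ae_eq_of_measurable_uncurry hF
    (measurable_from_prod_countable_left fun i => (measurable_pi_apply i).comp hZ.measurable)

lemma exists_factorsThrough_ae_eq_driver (hF : IsCompletedNaturalFiltration P X F)
    {f : Ω → ℕ → ℝ → (Fin N → ℝ) → ℝ} (hf : DriverAdapted F f) (t : ℕ) :
    ∃ f' : Ω → ℝ × (Fin N → ℝ) → ℝ, f'.FactorsThrough (trajectory X t) ∧
      ∀ᵐ ω ∂P, ∀ y z, f' ω (y, z) = f ω t y z := by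
  obtain ⟨f', hf', hae⟩ := exists_factorsThrough_ae_eq_of_measurable_uncurry hF
    (h := fun ω (p : ℝ × (Fin N → ℝ)) => f ω t p.1 p.2) (hf t)
  exact ⟨f', hf', hae.mono fun ω hω y z => congrFun hω (y, z)⟩

lemma ae_norm_le_of_stronglyMeasurable (hX : BasisValued X)
    (hF : IsCompletedNaturalFiltration P X F) {w : Ω → Fin N → ℝ}
    (hw : StronglyMeasurable[F t] w) : ∃ C, ∀ᵐ ω ∂P, ‖w ω‖ ≤ C := by
  obtain ⟨w', hw', hae⟩ := exists_factorsThrough_ae_eq_of_stronglyMeasurable_pi hF hw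
  obtain ⟨C, hC⟩ := ((finite_range_of_factorsThrough hX hw').image norm).bddAbove
  exact ⟨C, hae.mono fun ω hω => hω ▸ hC ⟨_, ⟨ω, rfl⟩, rfl⟩⟩

lemma ae_apply_of_forall_ae (hX : BasisValued X) (hF : IsCompletedNaturalFiltration P X F)
    {p : Ω → (Fin N → ℝ) → Prop} (hp : ∀ z, ∀ᵐ ω ∂P, p ω z) {Z : Ω → Fin N → ℝ}
    (hZ : StronglyMeasurable[F t] Z) : ∀ᵐ ω ∂P, p ω (Z ω) := by
  obtain ⟨Z', hZ', hae⟩ := exists_factorsThrough_ae_eq_of_stronglyMeasurable_pi hF hZ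
  filter_upwards [(ae_ball_iff (finite_range_of_factorsThrough hX hZ').countable).2
    fun z _ => hp z, hae] with ω h hω
  exact hω ▸ h _ ⟨ω, rfl⟩

end Versions

section MartingaleDifference

variable {P : Measure Ω} {F : Filtration ℕ mΩ} {X : ℕ → Ω → (Fin N → ℝ)} {t : ℕ}

variable [IsFiniteMeasure P]

lemma condExp_Mdiff_ae_eq_zero {i : Fin N} (hXi : Integrable (fun ω => X (t + 1) ω i) P) :
    P[fun ω => Mdiff P F X t ω i|F t] =ᵐ[P] 0 := by
  have hsub := condExp_sub (m := F t) hXi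
    (integrable_condExp (m := F t) (f := fun ω => X (t + 1) ω i))
  rw [condExp_of_stronglyMeasurable (F.le t) stronglyMeasurable_condExp integrable_condExp,
    sub_self] at hsub
  exact hsub

lemma condExp_dotR_Mdiff_ae_eq_zero {w : Ω → Fin N → ℝ}
    (hw : StronglyMeasurable[F t] w) (hXi : ∀ i, Integrable (fun ω => X (t + 1) ω i) P)
    (hwM : ∀ i, Integrable (fun ω => w ω i * Mdiff P F X t ω i) P) :
    P[fun ω => dotR (w ω) (Mdiff P F X t ω)|F t] =ᵐ[P] 0 := by
  have hterm : ∀ i, P[fun ω => w ω i * Mdiff P F X t ω i|F t] =ᵐ[P] 0 := fun i => by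
    show P[(fun ω => w ω i) * (fun ω => Mdiff P F X t ω i)|F t] =ᵐ[P] 0
    refine (condExp_mul_of_stronglyMeasurable_left
      ((measurable_pi_apply i).comp hw.measurable).stronglyMeasurable (hwM i)
      ((hXi i).sub integrable_condExp)).trans ?_
    filter_upwards [condExp_Mdiff_ae_eq_zero (F := F) (hXi i)] with ω hω
    simp [hω]
  have hsum : (fun ω => dotR (w ω) (Mdiff P F X t ω)) =
      ∑ i, fun ω => w ω i * Mdiff P F X t ω i := by
    ext ω
    simp [dotR]
  rw [hsum]
  refine (condExp_finsetSum (fun i _ => hwM i) (F t)).trans ?_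
  filter_upwards [ae_all_iff.2 hterm] with ω hω
  simp [hω]

lemma integrable_X (hX : BasisValued X) (hF : IsCompletedNaturalFiltration P X F) (s : ℕ)
    (i : Fin N) : Integrable (fun ω => X s ω i) P := by
  have hXs : (fun ω => X s ω i).FactorsThrough (trajectory X s) :=
    fun _ _ h => congrFun (congrFun h (Fin.last s)) i
  refine Integrable.of_bound
    ((stronglyMeasurable_of_factorsThrough hX hF hXs).mono (F.le s)).aestronglyMeasurable 1
    (ae_of_all _ fun ω => ?_)
  obtain ⟨j, hj⟩ := hX s ω
  rw [hj, e, Pi.single_apply]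
  split_ifs <;> simp

lemma integrable_mul_Mdiff (hX : BasisValued X) (hF : IsCompletedNaturalFiltration P X F)
    {w : Ω → Fin N → ℝ} (hw : StronglyMeasurable[F t] w) (i : Fin N) :
    Integrable (fun ω => w ω i * Mdiff P F X t ω i) P := by
  obtain ⟨C, hC⟩ := ae_norm_le_of_stronglyMeasurable hX hF hw
  exact ((integrable_X hX hF (t + 1) i).sub integrable_condExp).bdd_mul
    (((measurable_pi_apply i).comp hw.measurable).mono (F.le t) le_rfl).aestronglyMeasurable
    (hC.mono fun ω hω => (norm_le_pi_norm (w ω) i).trans hω)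

lemma ae_eq_zero_of_ae_eq_dotR_Mdiff (hX : BasisValued X)
    (hF : IsCompletedNaturalFiltration P X F) {D : Ω → ℝ} {w : Ω → Fin N → ℝ}
    (hD : StronglyMeasurable[F t] D) (hw : StronglyMeasurable[F t] w)
    (hDw : D =ᵐ[P] fun ω => dotR (w ω) (Mdiff P F X t ω)) : D =ᵐ[P] 0 := by
  have hwM := integrable_mul_Mdiff hX hF hw
  have hint : Integrable D P :=
    (integrable_finsetSum Finset.univ fun i _ => hwM i).congr hDw.symm
  calc D = P[D|F t] := (condExp_of_stronglyMeasurable (F.le t) hD hint).symm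
    _ =ᵐ[P] P[fun ω => dotR (w ω) (Mdiff P F X t ω)|F t] := condExp_congr_ae hDw
    _ =ᵐ[P] 0 := condExp_dotR_Mdiff_ae_eq_zero hw (integrable_X hX hF (t + 1)) hwM

end MartingaleDifference

/-- Condition (i) on the driver. -/
def DriverRespectsEquivM (P : Measure Ω) (F : Filtration ℕ mΩ) (X : ℕ → Ω → (Fin N → ℝ))
    (f : Ω → ℕ → ℝ → (Fin N → ℝ) → ℝ) : Prop :=
  ∀ (Y : ℕ → Ω → ℝ) (Z Z' : ℕ → Ω → Fin N → ℝ), Adapted F Y → Adapted F Z →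
    Adapted F Z' → equivM P F X Z Z' →
    ∀ t : ℕ, ∀ᵐ ω ∂P, f ω t (Y t ω) (Z t ω) = f ω t (Y t ω) (Z' t ω)

section Uniqueness

variable {P : Measure Ω} {F : Filtration ℕ mΩ} {X : ℕ → Ω → (Fin N → ℝ)}
  {f : Ω → ℕ → ℝ → (Fin N → ℝ) → ℝ} {t : ℕ}

lemma solvesFiniteBSDE_iff {T : ℕ} {ξ : Ω → ℝ} {Y : ℕ → Ω → ℝ} {Z : ℕ → Ω → Fin N → ℝ} :
    SolvesFiniteBSDE P F X f T ξ Y Z ↔ Adapted F Y ∧ Adapted F Z ∧ Y T =ᵐ[P] ξ ∧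
      ∀ t < T, ∀ᵐ ω ∂P,
        Y t ω - f ω t (Y t ω) (Z t ω) + dotR (Z t ω) (Mdiff P F X t ω) = Y (t + 1) ω := by
  rw [SolvesFiniteBSDE, forall_ae_sub_sum_add_sum_eq_iff]

lemma DriverAdapted.measurable_comp (hf : DriverAdapted F f) {y : Ω → ℝ}
    {z : Ω → Fin N → ℝ} (hy : Measurable[F t] y) (hz : Measurable[F t] z) :
    Measurable[F t] fun ω => f ω t (y ω) (z ω) :=
  (hf t).comp (measurable_id.prodMk (hy.prodMk hz))

lemma equivMt_of_ae_dotR_eq {Z Z' : Ω → Fin N → ℝ}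
    (h : ∀ᵐ ω ∂P, dotR (Z ω) (Mdiff P F X t ω) = dotR (Z' ω) (Mdiff P F X t ω)) :
    equivMt P F X t Z Z' := by
  have h0 : (fun ω => dotR (Z ω - Z' ω) (Mdiff P F X t ω) ^ 2) =ᵐ[P] 0 :=
    h.mono fun ω hω => by simp [dotR_sub_left, hω]
  exact (condExp_congr_ae h0).trans (by rw [condExp_zero])

lemma ae_driver_eq_of_equivMt (hf1 : DriverRespectsEquivM P F X f) {Y : ℕ → Ω → ℝ}
    {Z Z' : ℕ → Ω → Fin N → ℝ} (hY : Adapted F Y) (hZ : Adapted F Z) (hZ' : Adapted F Z')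
    (h : equivMt P F X t (Z t) (Z' t)) :
    ∀ᵐ ω ∂P, f ω t (Y t ω) (Z t ω) = f ω t (Y t ω) (Z' t ω) := by
  have hadapted : Adapted F (Function.update Z t (Z' t)) := fun s => by
    rcases eq_or_ne s t with rfl | hs
    · simpa using hZ' s
    · simpa [hs] using hZ s
  have hequiv : equivM P F X Z (Function.update Z t (Z' t)) := fun s => by
    rcases eq_or_ne s t with rfl | hs
    · simpa using h
    · simpa [hs] using equivMt_of_ae_dotR_eq (ae_of_all _ fun _ => rfl)
  simpa using hf1 Y Z _ hY hZ hadapted hequiv t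

lemma equivMt_and_ae_eq_of_step (hX : BasisValued X) (hF : IsCompletedNaturalFiltration P X F)
    [IsFiniteMeasure P] (hfAd : DriverAdapted F f) (hf1 : DriverRespectsEquivM P F X f)
    (hf2 : ∀ z, ∀ᵐ ω ∂P, Function.Bijective fun y : ℝ => y - f ω t y z)
    {Y Y' : ℕ → Ω → ℝ} {Z Z' : ℕ → Ω → Fin N → ℝ} (hY : Adapted F Y) (hY' : Adapted F Y')
    (hZ : Adapted F Z) (hZ' : Adapted F Z')
    (hstep : ∀ᵐ ω ∂P,
      Y t ω - f ω t (Y t ω) (Z t ω) + dotR (Z t ω) (Mdiff P F X t ω) = Y (t + 1) ω)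
    (hstep' : ∀ᵐ ω ∂P,
      Y' t ω - f ω t (Y' t ω) (Z' t ω) + dotR (Z' t ω) (Mdiff P F X t ω) = Y' (t + 1) ω)
    (hnext : Y (t + 1) =ᵐ[P] Y' (t + 1)) :
    equivMt P F X t (Z t) (Z' t) ∧ Y t =ᵐ[P] Y' t := by
  set D : Ω → ℝ := fun ω => (Y t ω - f ω t (Y t ω) (Z t ω)) -
    (Y' t ω - f ω t (Y' t ω) (Z' t ω))
  have hDw : D =ᵐ[P] fun ω => dotR (Z' t ω - Z t ω) (Mdiff P F X t ω) := by
    filter_upwards [hstep, hstep', hnext] with ω h h' hn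
    simp only [D, dotR_sub_left]
    linarith
  have hD : D =ᵐ[P] 0 := ae_eq_zero_of_ae_eq_dotR_Mdiff hX hF
    ((hY t).sub (hfAd.measurable_comp (hY t) (hZ t))
      |>.sub ((hY' t).sub (hfAd.measurable_comp (hY' t) (hZ' t)))).stronglyMeasurable
    ((hZ' t).sub (hZ t)).stronglyMeasurable hDw
  have hZZ' : equivMt P F X t (Z t) (Z' t) := by
    refine equivMt_of_ae_dotR_eq ?_
    filter_upwards [hDw, hD] with ω h h0
    rw [h0, dotR_sub_left] at h
    simp only [Pi.zero_apply] at h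
    linarith
  refine ⟨hZZ', ?_⟩
  filter_upwards [hD, ae_driver_eq_of_equivMt hf1 hY' hZ hZ' hZZ',
    ae_apply_of_forall_ae hX hF hf2 (hZ t).stronglyMeasurable] with ω h0 hf hbij
  refine hbij.injective ?_
  simp only [D, Pi.zero_apply] at h0
  linarith

theorem SolvesFiniteBSDE.unique [IsFiniteMeasure P] (hX : BasisValued X)
    (hF : IsCompletedNaturalFiltration P X F) (hfAd : DriverAdapted F f)
    (hf1 : DriverRespectsEquivM P F X f) {T : ℕ}
    (hf2 : ∀ z t, t < T → ∀ᵐ ω ∂P, Function.Bijective fun y : ℝ => y - f ω t y z)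
    {ξ : Ω → ℝ} {Y Y' : ℕ → Ω → ℝ} {Z Z' : ℕ → Ω → Fin N → ℝ}
    (h : SolvesFiniteBSDE P F X f T ξ Y Z) (h' : SolvesFiniteBSDE P F X f T ξ Y' Z') :
    (∀ t ≤ T, Y t =ᵐ[P] Y' t) ∧ ∀ t < T, equivMt P F X t (Z t) (Z' t) := by
  obtain ⟨hY, hZ, hYT, hstep⟩ := solvesFiniteBSDE_iff.1 h
  obtain ⟨hY', hZ', hYT', hstep'⟩ := solvesFiniteBSDE_iff.1 h'
  have key : ∀ t < T, Y (t + 1) =ᵐ[P] Y' (t + 1) →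
      equivMt P F X t (Z t) (Z' t) ∧ Y t =ᵐ[P] Y' t := fun t ht =>
    equivMt_and_ae_eq_of_step hX hF hfAd hf1 (hf2 · t ht) hY hY' hZ hZ' (hstep t ht)
      (hstep' t ht)
  have hYY' : ∀ t ≤ T, Y t =ᵐ[P] Y' t := by
    intro t ht
    induction ht using Nat.decreasingInduction with
    | self => exact hYT.trans hYT'.symm
    | of_succ t ht ih => exact (key t ht ih).2
  exact ⟨hYY', fun t ht => (key t ht (hYY' (t + 1) ht)).1⟩

end Uniqueness

open Classical in
def pathVersion (P : Measure Ω) (X : ℕ → Ω → (Fin N → ℝ)) (t : ℕ) (g : Ω → ℝ) : Ω → ℝ :=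
  if h : ∃ g' : Ω → ℝ, g'.FactorsThrough (trajectory X t) ∧ g' =ᵐ[P] g then h.choose else 0

/-- The `i`-th coordinate is the value of `g` on the continuation of the current path by `e i`,
so that `Zᵀ X_{t+1} = g` when `g` is a function of `(X 0, …, X (t+1))`. -/
def martingaleIntegrand (X : ℕ → Ω → (Fin N → ℝ)) (t : ℕ) (g : Ω → ℝ) (ω : Ω) : Fin N → ℝ :=
  fun i => Function.extend (trajectory X (t + 1)) g 0 (Fin.snoc (trajectory X t ω) (e N i))

/-- Taking the right-hand side through `pathVersion` makes the pathwise choice of the solution `y`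
a function of the trajectory, hence `F t`-measurable. -/
def backwardStep (P : Measure Ω) (F : Filtration ℕ mΩ) (X : ℕ → Ω → (Fin N → ℝ))
    (f' : Ω → ℝ × (Fin N → ℝ) → ℝ) (t : ℕ) (g : Ω → ℝ) (ω : Ω) : ℝ :=
  Function.invFun (fun y => y - f' ω (y, martingaleIntegrand X t g ω))
    (pathVersion P X t (fun ω => dotR (martingaleIntegrand X t g ω) (condExpX P F X t ω)) ω)

section Existence

variable {P : Measure Ω} {F : Filtration ℕ mΩ} {X : ℕ → Ω → (Fin N → ℝ)} {t : ℕ}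

lemma factorsThrough_pathVersion (g : Ω → ℝ) :
    (pathVersion P X t g).FactorsThrough (trajectory X t) := by
  unfold pathVersion
  split_ifs with h
  exacts [h.choose_spec.1, fun _ _ _ => rfl]

lemma pathVersion_ae_eq (hF : IsCompletedNaturalFiltration P X F) {g : Ω → ℝ}
    (hg : StronglyMeasurable[F t] g) : pathVersion P X t g =ᵐ[P] g := by
  have h := exists_factorsThrough_ae_eq_of_stronglyMeasurable hF hg
  rw [pathVersion, dif_pos h]
  exact h.choose_spec.2

lemma factorsThrough_martingaleIntegrand (g : Ω → ℝ) :
    (martingaleIntegrand X t g).FactorsThrough (trajectory X t) :=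
  fun _ _ h => by unfold martingaleIntegrand; rw [h]

lemma dotR_martingaleIntegrand (hX : BasisValued X) {g : Ω → ℝ}
    (hg : g.FactorsThrough (trajectory X (t + 1))) (ω : Ω) :
    dotR (martingaleIntegrand X t g ω) (X (t + 1) ω) = g ω := by
  obtain ⟨i, hi⟩ := hX (t + 1) ω
  rw [hi, dotR_e, martingaleIntegrand, ← hi, ← trajectory_succ, hg.extend_apply]

lemma factorsThrough_backwardStep {f' : Ω → ℝ × (Fin N → ℝ) → ℝ}
    (hf' : f'.FactorsThrough (trajectory X t)) (g : Ω → ℝ) :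
    (backwardStep P F X f' t g).FactorsThrough (trajectory X t) := fun _ _ h => by
  simp only [backwardStep, hf' h, factorsThrough_martingaleIntegrand g h,
    factorsThrough_pathVersion _ h]

lemma ae_backwardStep_step (hX : BasisValued X) (hF : IsCompletedNaturalFiltration P X F)
    {f : Ω → ℕ → ℝ → (Fin N → ℝ) → ℝ} {f' : Ω → ℝ × (Fin N → ℝ) → ℝ}
    (hf' : ∀ᵐ ω ∂P, ∀ y z, f' ω (y, z) = f ω t y z)
    (hf2 : ∀ z, ∀ᵐ ω ∂P, Function.Bijective fun y : ℝ => y - f ω t y z) {g : Ω → ℝ}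
    (hg : g.FactorsThrough (trajectory X (t + 1))) :
    ∀ᵐ ω ∂P, backwardStep P F X f' t g ω -
        f ω t (backwardStep P F X f' t g ω) (martingaleIntegrand X t g ω) +
          dotR (martingaleIntegrand X t g ω) (Mdiff P F X t ω) = g ω := by
  set Z := martingaleIntegrand X t g
  have hZ : StronglyMeasurable[F t] Z :=
    stronglyMeasurable_of_factorsThrough hX hF (factorsThrough_martingaleIntegrand g)
  have hV : StronglyMeasurable[F t] fun ω => dotR (Z ω) (condExpX P F X t ω) :=
    (Finset.measurable_sum _ fun i _ => ((measurable_pi_apply i).comp hZ.measurable).mul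
      stronglyMeasurable_condExp.measurable).stronglyMeasurable
  filter_upwards [pathVersion_ae_eq hF hV, hf', ae_apply_of_forall_ae hX hF hf2 hZ]
    with ω hVω hf'ω hbij
  have hsolve : backwardStep P F X f' t g ω - f ω t (backwardStep P F X f' t g ω) (Z ω) =
      dotR (Z ω) (condExpX P F X t ω) := by
    simp only [backwardStep, hf'ω]
    exact (Function.invFun_eq (hbij.surjective _)).trans hVω
  rw [dotR_Mdiff, dotR_martingaleIntegrand hX hg]
  linarith

theorem exists_solvesFiniteBSDE (hX : BasisValued X) (hF : IsCompletedNaturalFiltration P X F)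
    {T : ℕ} {ξ : Ω → ℝ} (hξ : StronglyMeasurable[F T] ξ) {f : Ω → ℕ → ℝ → (Fin N → ℝ) → ℝ}
    (hfAd : DriverAdapted F f)
    (hf2 : ∀ z t, t < T → ∀ᵐ ω ∂P, Function.Bijective fun y : ℝ => y - f ω t y z) :
    ∃ Y Z, SolvesFiniteBSDE P F X f T ξ Y Z := by
  obtain ⟨ξ', hξ', hξ'ξ⟩ := exists_factorsThrough_ae_eq_of_stronglyMeasurable hF hξ
  choose f' hf' hf'f using exists_factorsThrough_ae_eq_driver hF hfAd
  set Y := backwardIter T ξ' fun t => backwardStep P F X (f' t) t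
  have hY_lt : ∀ t < T, Y t = backwardStep P F X (f' t) t (Y (t + 1)) :=
    fun t => backwardIter_of_lt
  have hY_ge : ∀ t ≥ T, Y t = ξ' := fun t => backwardIter_of_le
  have hY : ∀ t ≤ T, (Y t).FactorsThrough (trajectory X t) := by
    intro t ht
    rcases ht.lt_or_eq with ht | rfl
    · exact hY_lt t ht ▸ factorsThrough_backwardStep (hf' t) _
    · exact hY_ge t le_rfl ▸ hξ'
  refine ⟨Y, fun t => martingaleIntegrand X t (Y (t + 1)), solvesFiniteBSDE_iff.2
    ⟨fun t => ?_, fun t => (stronglyMeasurable_of_factorsThrough hX hF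
      (factorsThrough_martingaleIntegrand _)).measurable, hY_ge T le_rfl ▸ hξ'ξ, fun t ht => ?_⟩⟩
  · rcases lt_or_ge t T with ht | ht
    · exact (stronglyMeasurable_of_factorsThrough hX hF (hY t ht.le)).measurable
    · exact hY_ge t ht ▸
        ((stronglyMeasurable_of_factorsThrough hX hF hξ').mono (F.mono ht)).measurable
  · rw [hY_lt t ht]
    exact ae_backwardStep_step hX hF (hf'f t) (hf2 · t ht) (hY (t + 1) ht)

end Existence

theorem finite_horizon_exists_unique_general
    {Ω : Type*} {mΩ : MeasurableSpace Ω} {N : ℕ}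
    (P : Measure Ω) [IsProbabilityMeasure P] (F : Filtration ℕ mΩ)
    (X : ℕ → Ω → (Fin N → ℝ)) (hX : BasisValued X)
    (hF : IsCompletedNaturalFiltration P X F)
    (T : ℕ) (ξ : Ω → ℝ) (hξ : StronglyMeasurable[F T] ξ)
    (f : Ω → ℕ → ℝ → (Fin N → ℝ) → ℝ) (hfAd : DriverAdapted F f)
    (hf1 : ∀ (Y : ℕ → Ω → ℝ) (Z Z' : ℕ → Ω → Fin N → ℝ), Adapted F Y → Adapted F Z →
      Adapted F Z' → equivM P F X Z Z' →
      ∀ t : ℕ, ∀ᵐ ω ∂P, f ω t (Y t ω) (Z t ω) = f ω t (Y t ω) (Z' t ω))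
    (hf2 : ∀ (z : Fin N → ℝ) (t : ℕ), t < T →
      ∀ᵐ ω ∂P, Function.Bijective fun y : ℝ => y - f ω t y z) :
    ∃ (Y : ℕ → Ω → ℝ) (Z : ℕ → Ω → Fin N → ℝ), SolvesFiniteBSDE P F X f T ξ Y Z ∧
      ∀ (Y' : ℕ → Ω → ℝ) (Z' : ℕ → Ω → Fin N → ℝ), SolvesFiniteBSDE P F X f T ξ Y' Z' →
        (∀ t ≤ T, Y t =ᵐ[P] Y' t) ∧ ∀ t < T, equivMt P F X t (Z t) (Z' t) := by
  obtain ⟨Y, Z, hYZ⟩ := exists_solvesFiniteBSDE hX hF hξ hfAd hf2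
  exact ⟨Y, Z, hYZ, fun Y' Z' hYZ' => hYZ.unique hX hF hfAd hf1 hf2 hYZ'⟩

/-- **Finite horizon existence and uniqueness** for discrete-time BSDEs. -/
theorem finite_horizon_exists_unique
    {Ω : Type*} {mΩ : MeasurableSpace Ω} {N : ℕ}
    (P : Measure Ω) [IsProbabilityMeasure P] (F : Filtration ℕ mΩ)
    (X : ℕ → Ω → (Fin N → ℝ)) (hX : BasisValued X)
    (hF : IsCompletedNaturalFiltration P X F)
    (T : ℕ) (hT : 0 < T) (ξ : Ω → ℝ) (hξ : StronglyMeasurable[F T] ξ)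
    (f : Ω → ℕ → ℝ → (Fin N → ℝ) → ℝ) (hfAd : DriverAdapted F f)
    (hf1 : ∀ (Y : ℕ → Ω → ℝ) (Z Z' : ℕ → Ω → Fin N → ℝ), Adapted F Y → Adapted F Z →
      Adapted F Z' → equivM P F X Z Z' →
      ∀ t : ℕ, ∀ᵐ ω ∂P, f ω t (Y t ω) (Z t ω) = f ω t (Y t ω) (Z' t ω))
    (hf2 : ∀ (z : Fin N → ℝ) (t : ℕ), t < T →
      ∀ᵐ ω ∂P, Function.Bijective fun y : ℝ => y - f ω t y z) :
    ∃ (Y : ℕ → Ω → ℝ) (Z : ℕ → Ω → Fin N → ℝ), SolvesFiniteBSDE P F X f T ξ Y Z ∧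
      ∀ (Y' : ℕ → Ω → ℝ) (Z' : ℕ → Ω → Fin N → ℝ), SolvesFiniteBSDE P F X f T ξ Y' Z' →
        (∀ t ≤ T, Y t =ᵐ[P] Y' t) ∧ ∀ t < T, equivMt P F X t (Z t) (Z' t) :=
  finite_horizon_exists_unique_general P F X hX hF T ξ hξ f hfAd hf1 hf2

end DiscreteEBSDE
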